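/- arXiv:2009.10213 — 3 statements merged into one kernel-verified Lean document; each statement's English description precedes it below -/
import Mathlib

section
/- Define a bilinear form on real polynomials by ⟨xⁱ, xʲ⟩ = ν_{i+j}, where ν_{2m} = (-1)^m·C(2m,m)/(m+1) and ν_{odd} = 0. Then the Fibonacci polynomials satisfy ⟨P_n, P_n⟩ = (-1)^n for every n ≥ 0. -/
/-- Signed Catalan moments: `ν_{2m} = (-1)^m C(2m,m)/(m+1)`, `ν_{odd} = 0`. -/
noncomputable def sgnMoment (n : ℕ) : ℚ :=
  if Even n then (-1) ^ (n / 2) * (Nat.choose n (n / 2) : ℚ) / (n / 2 + 1) else 0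

/-- The bilinear "moment" pairing determined by `⟨xⁱ, xʲ⟩ = ν_{i+j}`. -/
noncomputable def momForm (ν : ℕ → ℚ) (p q : Polynomial ℚ) : ℚ :=
  ∑ i ∈ Finset.range (p.natDegree + 1), ∑ j ∈ Finset.range (q.natDegree + 1),
    p.coeff i * q.coeff j * ν (i + j)

/-- Fibonacci polynomials. -/
noncomputable def fibPoly : ℕ → Polynomial ℚ
  | 0 => 1
  | 1 => Polynomial.X
  | n + 2 => Polynomial.X * fibPoly (n + 1) + fibPoly n

open Polynomial Finset

/-- Signed ballot numbers: the value of the moment functional on `x^k P_n`. -/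
noncomputable def balM (n k : ℕ) : ℚ :=
  if n ≤ k ∧ (k - n) % 2 = 0 then
    (-1 : ℚ) ^ ((k + n) / 2) *
      ((Nat.choose k ((k - n) / 2) : ℚ) - (Nat.choose k ((k + n) / 2 + 1) : ℚ))
  else 0

lemma fibPoly_monic_natDegree (n : ℕ) :
    (fibPoly n).Monic ∧ (fibPoly n).natDegree = n := by
  induction n using Nat.twoStepInduction with
  | zero => exact ⟨monic_one, natDegree_one⟩
  | one => exact ⟨monic_X, natDegree_X⟩
  | more n ih1 ih2 =>
    obtain ⟨hm1, hd1⟩ := ih1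
    obtain ⟨hm2, hd2⟩ := ih2
    have hXm : (Polynomial.X * fibPoly (n + 1)).Monic := monic_X.mul hm2
    have hXd : (Polynomial.X * fibPoly (n + 1)).natDegree = n + 2 := by
      rw [monic_X.natDegree_mul hm2, natDegree_X, hd2]
      omega
    have hlt : (fibPoly n).degree < (Polynomial.X * fibPoly (n + 1)).degree := by
      apply degree_lt_degree
      rw [hXd, hd1]; omega
    refine ⟨?_, ?_⟩
    · rw [fibPoly]; exact hXm.add_of_left hlt
    · rw [fibPoly, natDegree_add_eq_left_of_degree_lt hlt, hXd]

/-- Moment functional evaluated against `x^k P_n`, as a finite sum. -/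
noncomputable def Tm (n k : ℕ) : ℚ :=
  ∑ j ∈ Finset.range (n + 1), (fibPoly n).coeff j * sgnMoment (k + j)

lemma balM_rec (n k : ℕ) : balM (n + 2) k = balM (n + 1) (k + 1) + balM n k := by
  by_cases h1 : n ≤ k
  · by_cases h2 : (k - n) % 2 = 0
    · by_cases h3 : k = n
      · subst h3
        have e0 : balM (k + 2) k = 0 := by
          rw [balM, if_neg]; omega
        have e1 : balM (k + 1) (k + 1) = (-1 : ℚ) ^ (k + 1) := by
          rw [balM, if_pos (by omega)]
          have d1 : (k + 1 - (k + 1)) / 2 = 0 := by omega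
          have d2 : (k + 1 + (k + 1)) / 2 = k + 1 := by omega
          rw [d1, d2, Nat.choose_zero_right,
            Nat.choose_eq_zero_of_lt (by omega)]
          push_cast; ring
        have e2 : balM k k = (-1 : ℚ) ^ k := by
          rw [balM, if_pos (by omega)]
          have d1 : (k - k) / 2 = 0 := by omega
          have d2 : (k + k) / 2 = k := by omega
          rw [d1, d2, Nat.choose_zero_right,
            Nat.choose_eq_zero_of_lt (by omega)]
          push_cast; ring
        rw [e0, e1, e2, pow_succ]; ring
      · -- k ≥ n + 2, same parity
        obtain ⟨a, rfl⟩ : ∃ a, k = n + 2 + 2 * a := ⟨(k - n - 2) / 2, by omega⟩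
        have c1 : balM (n + 2) (n + 2 + 2 * a) =
            (-1 : ℚ) ^ (n + a + 2) *
              ((Nat.choose (n + 2 + 2 * a) a : ℚ) -
               (Nat.choose (n + 2 + 2 * a) (n + a + 3) : ℚ)) := by
          rw [balM, if_pos (by omega)]
          have d2' : (n + 2 + 2 * a + (n + 2)) / 2 + 1 = n + a + 3 := by omega
          have d1 : (n + 2 + 2 * a - (n + 2)) / 2 = a := by omega
          have d2 : (n + 2 + 2 * a + (n + 2)) / 2 = n + a + 2 := by omega
          rw [d2', d1, d2]
        have c2 : balM (n + 1) (n + 2 + 2 * a + 1) =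
            (-1 : ℚ) ^ (n + a + 2) *
              ((Nat.choose (n + 2 + 2 * a + 1) (a + 1) : ℚ) -
               (Nat.choose (n + 2 + 2 * a + 1) (n + a + 3) : ℚ)) := by
          rw [balM, if_pos (by omega)]
          have d2' : (n + 2 + 2 * a + 1 + (n + 1)) / 2 + 1 = n + a + 3 := by omega
          have d1 : (n + 2 + 2 * a + 1 - (n + 1)) / 2 = a + 1 := by omega
          have d2 : (n + 2 + 2 * a + 1 + (n + 1)) / 2 = n + a + 2 := by omega
          rw [d2', d1, d2]
        have c3 : balM n (n + 2 + 2 * a) =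
            (-1 : ℚ) ^ (n + a + 1) *
              ((Nat.choose (n + 2 + 2 * a) (a + 1) : ℚ) -
               (Nat.choose (n + 2 + 2 * a) (n + a + 2) : ℚ)) := by
          rw [balM, if_pos (by omega)]
          have d2' : (n + 2 + 2 * a + n) / 2 + 1 = n + a + 2 := by omega
          have d1 : (n + 2 + 2 * a - n) / 2 = a + 1 := by omega
          have d2 : (n + 2 + 2 * a + n) / 2 = n + a + 1 := by omega
          rw [d2', d1, d2]
        rw [c1, c2, c3]
        have p1 : Nat.choose (n + 2 + 2 * a + 1) (a + 1) =
            Nat.choose (n + 2 + 2 * a) a + Nat.choose (n + 2 + 2 * a) (a + 1) :=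
          Nat.choose_succ_succ' (n + 2 + 2 * a) a
        have p2 : Nat.choose (n + 2 + 2 * a + 1) (n + a + 3) =
            Nat.choose (n + 2 + 2 * a) (n + a + 2) +
            Nat.choose (n + 2 + 2 * a) (n + a + 3) := by
          have h := Nat.choose_succ_succ' (n + 2 + 2 * a) (n + a + 2)
          rwa [show n + a + 2 + 1 = n + a + 3 from by omega] at h
        have hs : (-1 : ℚ) ^ (n + a + 2) = -(-1 : ℚ) ^ (n + a + 1) := by
          rw [show n + a + 2 = (n + a + 1) + 1 from rfl, pow_succ]; ring
        rw [p1, p2, hs]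
        push_cast
        ring
    · -- wrong parity: everything is 0
      have e0 : balM (n + 2) k = 0 := by rw [balM, if_neg (by omega)]
      have e1 : balM (n + 1) (k + 1) = 0 := by rw [balM, if_neg (by omega)]
      have e2 : balM n k = 0 := by rw [balM, if_neg (by omega)]
      rw [e0, e1, e2]; ring
  · have e0 : balM (n + 2) k = 0 := by rw [balM, if_neg (by omega)]
    have e1 : balM (n + 1) (k + 1) = 0 := by rw [balM, if_neg (by omega)]
    have e2 : balM n k = 0 := by rw [balM, if_neg (by omega)]
    rw [e0, e1, e2]; ring

lemma Tm_zero (k : ℕ) : Tm 0 k = balM 0 k := by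
  have : Tm 0 k = sgnMoment k := by
    simp [Tm, fibPoly]
  rw [this, sgnMoment, balM]
  by_cases h : Even k
  · have hk : k % 2 = 0 := Nat.even_iff.mp h
    rw [if_pos h, if_pos ⟨Nat.zero_le _, by omega⟩]
    obtain ⟨m, rfl⟩ : ∃ m, k = 2 * m := ⟨k / 2, by omega⟩
    have d1 : 2 * m / 2 = m := by omega
    have d2' : (2 * m + 0) / 2 + 1 = m + 1 := by omega
    have d2 : (2 * m - 0) / 2 = m := by omega
    rw [d1, d2', d2]
    have hden : ((2 * m : ℕ) : ℚ) / 2 + 1 = (m : ℚ) + 1 := by push_cast; ring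
    rw [hden]
    have hc : (Nat.choose (2 * m) (m + 1) : ℚ) * ((m : ℚ) + 1) =
        (Nat.choose (2 * m) m : ℚ) * m := by
      have h3 := Nat.choose_succ_right_eq (2 * m) m
      have h2 : 2 * m - m = m := by omega
      rw [h2] at h3
      exact_mod_cast h3
    have hm1 : (m : ℚ) + 1 ≠ 0 := by positivity
    field_simp
    rw [show (2 * m + 0) / 2 = m by omega]
    linear_combination ((-1 : ℚ) ^ m) * hc
  · have hk : k % 2 = 1 := Nat.odd_iff.mp (Nat.not_even_iff_odd.mp h)
    rw [if_neg h, if_neg (by omega)]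

lemma Tm_one (k : ℕ) : Tm 1 k = balM 1 k := by
  have : Tm 1 k = sgnMoment (k + 1) := by
    simp [Tm, fibPoly, Finset.sum_range_succ]
  rw [this, sgnMoment, balM]
  by_cases h : Even (k + 1)
  · have hk : (k + 1) % 2 = 0 := Nat.even_iff.mp h
    rw [if_pos h, if_pos (by omega)]
    obtain ⟨a, rfl⟩ : ∃ a, k = 2 * a + 1 := ⟨k / 2, by omega⟩
    have d1 : (2 * a + 1 + 1) / 2 = a + 1 := by omega
    have d2' : (2 * a + 1 + 1) / 2 + 1 = a + 2 := by omega
    have d3 : (2 * a + 1 - 1) / 2 = a := by omega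
    rw [d2', d1, d3]
    have hden : ((2 * a + 1 + 1 : ℕ) : ℚ) / 2 + 1 = (a : ℚ) + 2 := by
      push_cast; ring
    rw [hden]
    -- need: C(2a+2, a+1)/(a+2) = C(2a+1,a) - C(2a+1,a+2)
    have hsym : Nat.choose (2 * a + 1) (a + 1) = Nat.choose (2 * a + 1) a := by
      have h4 := Nat.choose_symm (n := 2 * a + 1) (k := a + 1) (by omega)
      have h2 : 2 * a + 1 - (a + 1) = a := by omega
      rw [h2] at h4
      exact h4.symm
    have hp : Nat.choose (2 * a + 1 + 1) (a + 1) =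
        Nat.choose (2 * a + 1) a + Nat.choose (2 * a + 1) (a + 1) :=
      Nat.choose_succ_succ' (2 * a + 1) a
    have hc : (Nat.choose (2 * a + 1) (a + 2) : ℚ) * ((a : ℚ) + 2) =
        (Nat.choose (2 * a + 1) (a + 1) : ℚ) * a := by
      have h4 := Nat.choose_succ_right_eq (2 * a + 1) (a + 1)
      have h2 : 2 * a + 1 - (a + 1) = a := by omega
      rw [h2, show a + 1 + 1 = a + 2 from by omega] at h4
      exact_mod_cast h4
    have ha2 : (a : ℚ) + 2 ≠ 0 := by positivity
    rw [hsym] at hc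
    rw [hp, hsym]
    push_cast
    field_simp
    linear_combination hc
  · have hk : (k + 1) % 2 = 1 := Nat.odd_iff.mp (Nat.not_even_iff_odd.mp h)
    rw [if_neg h, if_neg (by omega)]

lemma Tm_eq_balM (n : ℕ) : ∀ k, Tm n k = balM n k := by
  induction n using Nat.twoStepInduction with
  | zero => exact Tm_zero
  | one => exact Tm_one
  | more n ih1 ih2 =>
    intro k
    have hrec : Tm (n + 2) k = Tm (n + 1) (k + 1) + Tm n k := by
      have hdeg : ∀ m, (fibPoly m).natDegree = m := fun m =>
        (fibPoly_monic_natDegree m).2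
      rw [Tm, Tm, Tm]
      have hsplit : ∀ j ∈ Finset.range (n + 2 + 1),
          (fibPoly (n + 2)).coeff j * sgnMoment (k + j) =
          (Polynomial.X * fibPoly (n + 1)).coeff j * sgnMoment (k + j) +
          (fibPoly n).coeff j * sgnMoment (k + j) := by
        intro j _
        rw [show fibPoly (n + 2) = Polynomial.X * fibPoly (n + 1) + fibPoly n from rfl,
          Polynomial.coeff_add]
        ring
      rw [Finset.sum_congr rfl hsplit, Finset.sum_add_distrib]
      congr 1
      · -- shift: ∑_{j<n+3} (X*P).coeff j ν(k+j) = ∑_{i<n+2} P.coeff i ν(k+1+i)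
        rw [Finset.sum_range_succ']
        simp only [Polynomial.coeff_X_mul, Polynomial.mul_coeff_zero,
          Polynomial.coeff_X_zero, zero_mul, mul_zero, add_zero]
        apply Finset.sum_congr rfl
        intro i _
        rw [show k + (i + 1) = k + 1 + i from by omega]
      · -- trim: top two coefficients of fibPoly n vanish
        rw [Finset.sum_range_succ, Finset.sum_range_succ]
        have hz1 : (fibPoly n).coeff (n + 1) = 0 :=
          Polynomial.coeff_eq_zero_of_natDegree_lt (by rw [hdeg]; omega)
        have hz2 : (fibPoly n).coeff (n + 2) = 0 :=
          Polynomial.coeff_eq_zero_of_natDegree_lt (by rw [hdeg]; omega)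
        rw [hz1, hz2]
        ring
    rw [hrec, ih2, ih1 k, balM_rec]

/-- `⟨P_n, P_n⟩ = (-1)^n` for the signed-Catalan moment pairing. -/
theorem fibPoly_self_pairing (n : ℕ) :
    momForm sgnMoment (fibPoly n) (fibPoly n) = (-1 : ℚ) ^ n := by
  obtain ⟨hmon, hdeg⟩ := fibPoly_monic_natDegree n
  rw [momForm, hdeg]
  have hinner : ∀ i ∈ Finset.range (n + 1),
      (∑ j ∈ Finset.range (n + 1),
        (fibPoly n).coeff i * (fibPoly n).coeff j * sgnMoment (i + j)) =
      (fibPoly n).coeff i * balM n i := by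
    intro i _
    rw [← Tm_eq_balM, Tm, Finset.mul_sum]
    apply Finset.sum_congr rfl
    intro j _
    ring
  rw [Finset.sum_congr rfl hinner]
  rw [Finset.sum_eq_single_of_mem n (Finset.self_mem_range_succ n)]
  · have hlc : (fibPoly n).coeff n = 1 := by
      have := hmon.leadingCoeff
      rwa [Polynomial.leadingCoeff, hdeg] at this
    have hM : balM n n = (-1 : ℚ) ^ n := by
      rw [balM, if_pos ⟨le_refl n, by omega⟩]
      have d1 : (n - n) / 2 = 0 := by omega
      have d2 : (n + n) / 2 = n := by omega
      rw [d1, d2, Nat.choose_zero_right, Nat.choose_eq_zero_of_lt (by omega)]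
      push_cast; ring
    rw [hlc, hM, one_mul]
  · intro i hi hne
    have hM : balM n i = 0 := by
      rcases Nat.lt_or_ge i n with h | h
      · rw [balM, if_neg (by omega)]
      · exfalso; exact hne (by simp at hi; omega)
    rw [hM, mul_zero]
end

section
/- Define a bilinear form on real polynomials by ⟨xⁱ, xʲ⟩ = ν_{i+j}, with ν_{2m} = (-1)^m·C(2m,m)/(m+1), ν_{odd} = 0. Then ⟨P_n, P_m⟩ = 0 whenever n ≠ m, where P_n are the Fibonacci polynomials. -/
open Polynomial Finset

namespace FibOrth

/-- The moment functional as a linear map. -/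
noncomputable def L : Polynomial ℚ →ₗ[ℚ] ℚ :=
  Polynomial.lsum fun n => LinearMap.toSpanSingleton ℚ ℚ (sgnMoment n)

lemma L_monomial (n : ℕ) (a : ℚ) : L (Polynomial.monomial n a) = a * sgnMoment n := by
  simp [L, Polynomial.lsum_apply, Polynomial.sum_monomial_index,
    LinearMap.toSpanSingleton_apply, smul_eq_mul]

lemma L_X_pow (k : ℕ) : L (X ^ k) = sgnMoment k := by
  rw [X_pow_eq_monomial, L_monomial, one_mul]

/-- Signed ballot numbers: the closed form for `L (X^k * P_n)`. -/
noncomputable def F (k n : ℕ) : ℚ :=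
  if n ≤ k ∧ (k - n) % 2 = 0 then
    (-1) ^ ((k + n) / 2) * ((n : ℚ) + 1) / ((k : ℚ) + 1) * (Nat.choose (k + 1) ((k - n) / 2) : ℚ)
  else 0

lemma F_eq_zero_of_lt {k n : ℕ} (h : k < n) : F k n = 0 := by
  rw [F, if_neg (by omega)]

lemma nu_eq_F_zero (k : ℕ) : sgnMoment k = F k 0 := by
  rcases Nat.even_or_odd k with he | ho
  · obtain ⟨m, rfl⟩ := he
    have e1 : (m + m) / 2 = m := by omega
    have e2 : (m + m - 0) / 2 = m := by omega
    have e3 : (m + m + 0) / 2 = m := by omega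
    rw [sgnMoment, if_pos ⟨m, rfl⟩, F, if_pos (by omega), e1, e2, e3]
    have h1 : ((m : ℚ) + m + 1) * (Nat.choose (m + m) m : ℚ)
        = (Nat.choose (m + m + 1) (m + 1) : ℚ) * ((m : ℚ) + 1) := by
      exact_mod_cast Nat.add_one_mul_choose_eq (m + m) m
    have h2 : ((Nat.choose (m + m + 1) (m + 1) : ℕ) : ℚ)
        = ((Nat.choose (m + m + 1) m : ℕ) : ℚ) := by
      have h := Nat.choose_symm_half m
      have e : 2 * m + 1 = m + m + 1 := by omega
      rw [e] at h
      exact_mod_cast h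
    rw [h2] at h1
    push_cast
    have d1 : (m : ℚ) + 1 ≠ 0 := by positivity
    have d2 : (m : ℚ) + (m : ℚ) + 1 ≠ 0 := by positivity
    field_simp
    linear_combination 2 * h1
  · rw [sgnMoment, if_neg (by simpa [Nat.even_iff, Nat.odd_iff] using ho),
      F, if_neg (by simp only [Nat.odd_iff] at ho; omega)]

lemma nu_eq_F_one (k : ℕ) : sgnMoment (k + 1) = F k 1 := by
  rcases Nat.even_or_odd k with he | ho
  · have hk2 : k % 2 = 0 := Nat.even_iff.1 he
    rw [sgnMoment, if_neg (by simp only [Nat.even_iff]; omega), F, if_neg (by omega)]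
  · obtain ⟨m, rfl⟩ := ho
    have e1 : (2 * m + 1 + 1) / 2 = m + 1 := by omega
    have e2 : (2 * m + 1 - 1) / 2 = m := by omega
    have e3 : 2 * m + 1 + 1 = 2 * m + 2 := by omega
    rw [sgnMoment, if_pos ⟨m + 1, by omega⟩, F, if_pos (by omega), e3, e1, e2]
    have key : (Nat.choose (2 * m + 2) (m + 1) : ℚ) * ((m : ℚ) + 1)
        = (Nat.choose (2 * m + 2) m : ℚ) * ((m : ℚ) + 2) := by
      have h := Nat.choose_succ_right_eq (2 * m + 2) m
      have h2 : 2 * m + 2 - m = m + 2 := by omega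
      rw [h2] at h
      exact_mod_cast h
    push_cast
    have d1 : (2 * (m : ℚ) + 2) / 2 + 1 ≠ 0 := by positivity
    have d2 : 2 * (m : ℚ) + 1 + 1 ≠ 0 := by positivity
    field_simp
    linear_combination 2 * key

lemma F_rec (k n : ℕ) : F k (n + 2) = F (k + 1) (n + 1) + F k n := by
  rcases Nat.lt_or_ge k (n + 2) with hk | hk
  · rw [F, if_neg (by omega)]
    rcases Nat.lt_or_ge k n with h2 | h2
    · rw [F, if_neg (by omega), F, if_neg (by omega)]; ring
    · have hcase : k = n ∨ k = n + 1 := by omega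
      rcases hcase with rfl | rfl
      · rw [F, if_pos (by omega), F, if_pos (by omega)]
        have e1 : (k + 1 + (k + 1)) / 2 = k + 1 := by omega
        have e2 : (k + 1 - (k + 1)) / 2 = 0 := by omega
        have e3 : (k + k) / 2 = k := by omega
        have e4 : (k - k) / 2 = 0 := by omega
        rw [e1, e2, e3, e4, Nat.choose_zero_right, Nat.choose_zero_right]
        push_cast
        have d1 : (k : ℚ) + 1 ≠ 0 := by positivity
        have d2 : (k : ℚ) + 1 + 1 ≠ 0 := by positivity
        rw [pow_succ]
        field_simp
        ring
      · rw [F, if_neg (by omega), F, if_neg (by omega)]; ring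
  · rcases Nat.even_or_odd (k - n) with he | ho
    · obtain ⟨j, rfl⟩ : ∃ j, k = n + 2 + 2 * j := by
        obtain ⟨r, hr⟩ := he; exact ⟨r - 1, by omega⟩
      rw [F, if_pos (by omega), F, if_pos (by omega), F, if_pos (by omega)]
      have e1 : (n + 2 + 2 * j + (n + 2)) / 2 = n + j + 2 := by omega
      have e2 : (n + 2 + 2 * j - (n + 2)) / 2 = j := by omega
      have e3 : (n + 2 + 2 * j + 1 + (n + 1)) / 2 = n + j + 2 := by omega
      have e4 : (n + 2 + 2 * j + 1 - (n + 1)) / 2 = j + 1 := by omega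
      have e5 : (n + 2 + 2 * j + n) / 2 = n + j + 1 := by omega
      have e6 : (n + 2 + 2 * j - n) / 2 = j + 1 := by omega
      have e7 : n + 2 + 2 * j + 1 = n + 2 * j + 3 := by omega
      rw [e1, e2, e3, e4, e5, e6, e7]
      have e8 : n + 2 * j + 3 + 1 = n + 2 * j + 4 := by omega
      rw [e8]
      have h1 : (Nat.choose (n + 2 * j + 3) (j + 1) : ℚ) * ((j : ℚ) + 1)
          = (Nat.choose (n + 2 * j + 3) j : ℚ) * ((n : ℚ) + (j : ℚ) + 3) := by
        have h := Nat.choose_succ_right_eq (n + 2 * j + 3) j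
        have h' : n + 2 * j + 3 - j = n + j + 3 := by omega
        rw [h'] at h
        exact_mod_cast h
      have h2 : (Nat.choose (n + 2 * j + 4) (j + 1) : ℚ)
          = (Nat.choose (n + 2 * j + 3) j : ℚ) + (Nat.choose (n + 2 * j + 3) (j + 1) : ℚ) := by
        exact_mod_cast Nat.choose_succ_succ (n + 2 * j + 3) j
      rw [h2]
      have hsgn1 : ((-1 : ℚ)) ^ (n + j + 2) = (-1) ^ (n + j) := by rw [pow_succ, pow_succ]; ring
      have hsgn2 : ((-1 : ℚ)) ^ (n + j + 1) = -((-1 : ℚ)) ^ (n + j) := by rw [pow_succ]; ring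
      rw [hsgn1, hsgn2]
      push_cast
      have d1 : (n : ℚ) + 2 + 2 * (j : ℚ) + 1 ≠ 0 := by positivity
      have d2 : (n : ℚ) + 2 * (j : ℚ) + 3 + 1 ≠ 0 := by positivity
      field_simp
      linear_combination -2 * h1
    · obtain ⟨r, hr⟩ := ho
      rw [F, if_neg (by omega), F, if_neg (by omega), F, if_neg (by omega)]; ring

lemma L_pow_fib (n : ℕ) : ∀ k : ℕ, L (X ^ k * fibPoly n) = F k n := by
  induction n using Nat.twoStepInduction with
  | zero =>
    intro k
    rw [show fibPoly 0 = 1 from rfl, mul_one, L_X_pow, nu_eq_F_zero]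
  | one =>
    intro k
    rw [show fibPoly 1 = X from rfl, ← pow_succ, L_X_pow, nu_eq_F_one]
  | more n ih1 ih2 =>
    intro k
    have hsplit : X ^ k * fibPoly (n + 2) = X ^ (k + 1) * fibPoly (n + 1) + X ^ k * fibPoly n := by
      rw [show fibPoly (n + 2) = X * fibPoly (n + 1) + fibPoly n from rfl]
      ring
    rw [hsplit, map_add, ih2 (k + 1), ih1 k, F_rec]

lemma fibPoly_natDegree_le (n : ℕ) : (fibPoly n).natDegree ≤ n := by
  induction n using Nat.twoStepInduction with
  | zero => simp [fibPoly]
  | one => simp only [fibPoly]; exact Polynomial.natDegree_X_le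
  | more n ih1 ih2 =>
    rw [show fibPoly (n + 2) = X * fibPoly (n + 1) + fibPoly n from rfl]
    refine le_trans (Polynomial.natDegree_add_le _ _) (max_le ?_ (by omega))
    refine le_trans (Polynomial.natDegree_mul_le) ?_
    have := Polynomial.natDegree_X_le (R := ℚ)
    omega

lemma momForm_eq (p q : Polynomial ℚ) : momForm sgnMoment p q = L (p * q) := by
  conv_rhs =>
    rw [p.as_sum_range' (p.natDegree + 1) (lt_add_one _),
      q.as_sum_range' (q.natDegree + 1) (lt_add_one _)]
  rw [Finset.sum_mul_sum, map_sum]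
  rw [momForm]
  refine Finset.sum_congr rfl fun i _ => ?_
  rw [map_sum]
  refine Finset.sum_congr rfl fun j _ => ?_
  rw [Polynomial.monomial_mul_monomial, L_monomial, mul_assoc]

lemma momForm_symm (p q : Polynomial ℚ) : momForm sgnMoment p q = momForm sgnMoment q p := by
  rw [momForm, momForm, Finset.sum_comm]
  refine Finset.sum_congr rfl fun j _ => Finset.sum_congr rfl fun i _ => ?_
  rw [add_comm j i]; ring

lemma L_fib_mul {n m : ℕ} (h : n < m) : L (fibPoly n * fibPoly m) = 0 := by
  conv_lhs =>
    rw [(fibPoly n).as_sum_range' ((fibPoly n).natDegree + 1) (lt_add_one _)]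
  rw [Finset.sum_mul, map_sum]
  refine Finset.sum_eq_zero fun i hi => ?_
  have hi' : i < m := by
    have := fibPoly_natDegree_le n
    have := Finset.mem_range.1 hi
    omega
  rw [← Polynomial.C_mul_X_pow_eq_monomial, mul_assoc, ← Polynomial.smul_eq_C_mul,
    map_smul, L_pow_fib, F_eq_zero_of_lt hi', smul_zero]

end FibOrth

/-- `⟨P_n, P_m⟩ = 0` for `n ≠ m` under the signed-Catalan moment pairing. -/
theorem fibPoly_orthogonal (n m : ℕ) (h : n ≠ m) :
    momForm sgnMoment (fibPoly n) (fibPoly m) = 0 := by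
  rcases h.lt_or_gt with hlt | hlt
  · rw [FibOrth.momForm_eq]
    exact FibOrth.L_fib_mul hlt
  · rw [FibOrth.momForm_symm, FibOrth.momForm_eq]
    exact FibOrth.L_fib_mul hlt
end

section
/- For every polynomial P of degree d, P(x) = ∑_{k=0}^d (-1)^k·⟨P, P_k⟩·P_k(x), where ⟨·,·⟩ is the bilinear form determined by the signed Catalan moments ν and P_k are the Fibonacci polynomials. -/
open Polynomial Finset

noncomputable def Lmap : Polynomial ℚ →ₗ[ℚ] ℚ :=
  Polynomial.lsum fun n => LinearMap.toSpanSingleton ℚ ℚ (sgnMoment n)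

lemma Lmap_monomial (n : ℕ) (a : ℚ) : Lmap (Polynomial.monomial n a) = a * sgnMoment n := by
  simp [Lmap, Polynomial.lsum_apply, Polynomial.sum_monomial_index,
    LinearMap.toSpanSingleton_apply, smul_eq_mul]

lemma momForm_eq (p q : Polynomial ℚ) : momForm sgnMoment p q = Lmap (p * q) := by
  conv_rhs => rw [p.as_sum_range' (p.natDegree + 1) (Nat.lt_succ_self _),
    q.as_sum_range' (q.natDegree + 1) (Nat.lt_succ_self _)]
  rw [Finset.sum_mul_sum, map_sum]
  unfold momForm
  refine Finset.sum_congr rfl fun i _ => ?_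
  rw [map_sum]
  refine Finset.sum_congr rfl fun j _ => ?_
  rw [monomial_mul_monomial, Lmap_monomial]

noncomputable def cc : ℕ → ℕ → ℚ
  | 0, 0 => 1
  | 0, _ + 1 => 0
  | n + 1, 0 => -cc n 1
  | n + 1, k + 1 => cc n k - cc n (k + 2)

lemma cc_gt : ∀ n k, n < k → cc n k = 0 := by
  intro n
  induction n with
  | zero => intro k hk; match k, hk with | k + 1, _ => rfl
  | succ n ih =>
    intro k hk
    match k, hk with
    | k + 1, hk =>
      show cc n k - cc n (k + 2) = 0
      rw [ih k (by omega), ih (k + 2) (by omega), sub_zero]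

lemma cc_parity : ∀ n k, Odd (n + k) → cc n k = 0 := by
  intro n
  induction n with
  | zero => intro k hk
            match k with
            | 0 => simp at hk
            | k + 1 => rfl
  | succ n ih =>
    intro k hk
    match k with
    | 0 => show -cc n 1 = 0
           rw [ih 1 (by rw [Nat.odd_iff] at hk ⊢; omega), neg_zero]
    | k + 1 =>
      show cc n k - cc n (k + 2) = 0
      rw [ih k (by rw [Nat.odd_iff] at hk ⊢; omega),
        ih (k + 2) (by rw [Nat.odd_iff] at hk ⊢; omega), sub_zero]

noncomputable def fibPred : ℕ → Polynomial ℚ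
  | 0 => 0
  | k + 1 => fibPoly k

lemma fib_mul_X : ∀ k, Polynomial.X * fibPoly k = fibPoly (k + 1) - fibPred k := by
  intro k
  match k with
  | 0 => show (X : ℚ[X]) * 1 = X - 0; ring
  | k + 1 => show X * fibPoly (k+1) = (X * fibPoly (k+1) + fibPoly k) - fibPoly k; ring

lemma xpow_expand : ∀ n, (Polynomial.X : Polynomial ℚ) ^ n
    = ∑ k ∈ Finset.range (n + 1), Polynomial.C (cc n k) * fibPoly k := by
  intro n
  induction n with
  | zero => show (1 : Polynomial ℚ) = _; simp [Finset.sum_range_one]; show (1:ℚ[X]) = C (cc 0 0) * 1; simp [show cc 0 0 = 1 from rfl]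
  | succ n ih =>
    have key : ∑ k ∈ Finset.range (n + 1), C (cc n k) * fibPred k
        = ∑ k ∈ Finset.range (n + 1), C (cc n (k + 1)) * fibPoly k := by
      rw [Finset.sum_range_succ', Finset.sum_range_succ]
      show _ + C (cc n 0) * 0 = _ + _
      rw [cc_gt n (n + 1) (by omega), map_zero, zero_mul, mul_zero, add_zero, add_zero]
      rfl
    calc (X : ℚ[X]) ^ (n + 1) = X * X ^ n := by ring
      _ = ∑ k ∈ Finset.range (n + 1), C (cc n k) * (X * fibPoly k) := by
          rw [ih, Finset.mul_sum]; exact Finset.sum_congr rfl fun k _ => by ring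
      _ = ∑ k ∈ Finset.range (n + 1), (C (cc n k) * fibPoly (k + 1) - C (cc n k) * fibPred k) := by
          exact Finset.sum_congr rfl fun k _ => by rw [fib_mul_X]; ring
      _ = ∑ k ∈ Finset.range (n + 1), C (cc n k) * fibPoly (k + 1)
          - ∑ k ∈ Finset.range (n + 1), C (cc n (k + 1)) * fibPoly k := by
          rw [Finset.sum_sub_distrib, key]
      _ = ∑ k ∈ Finset.range (n + 1 + 1), C (cc (n + 1) k) * fibPoly k := by
          rw [Finset.sum_range_succ' (fun k => C (cc (n + 1) k) * fibPoly k) (n + 1)]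
          have h0 : cc (n + 1) 0 = -cc n 1 := rfl
          have hs : ∀ k, cc (n + 1) (k + 1) = cc n k - cc n (k + 2) := fun k => rfl
          simp only [h0, hs, map_sub, map_neg, sub_mul, neg_mul]
          rw [Finset.sum_sub_distrib]
          have : ∑ k ∈ Finset.range (n + 1), C (cc n (k + 2)) * fibPoly (k + 1)
              = ∑ k ∈ Finset.range (n + 1), C (cc n (k + 1)) * fibPoly k
                - C (cc n 1) * fibPoly 0 := by
            rw [Finset.sum_range_succ' (fun k => C (cc n (k + 1)) * fibPoly k) n,
              Finset.sum_range_succ (fun k => C (cc n (k + 2)) * fibPoly (k + 1)) n,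
              cc_gt n (n + 2) (by omega)]
            simp
          rw [this]
          show _ = _ + -(C (cc n 1) * fibPoly 0)
          ring

/-- `gg n j = C(n,j) - C(n,j-1)` (ballot numbers). -/
noncomputable def gg (n j : ℕ) : ℚ :=
  (n.choose j : ℚ) - (if j = 0 then 0 else (n.choose (j - 1) : ℚ))

lemma gg_pascal (n : ℕ) (j : ℕ) : gg (n + 1) (j + 1) = gg n (j + 1) + gg n j := by
  unfold gg
  match j with
  | 0 => simp [Nat.choose_succ_succ' n 0]
  | j + 1 =>
    simp only [Nat.succ_ne_zero, if_false, Nat.add_sub_cancel]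
    push_cast [Nat.choose_succ_succ' n (j + 1), Nat.choose_succ_succ' n j]
    ring

lemma gg_step (j : ℕ) : gg (2 * j + 1) j = gg (2 * j + 1 + 1) (j + 1) := by
  match j with
  | 0 => norm_num [gg]
  | j + 1 =>
    unfold gg
    simp only [Nat.succ_ne_zero, if_false, Nat.add_sub_cancel]
    have h1 : (2 * (j + 1) + 1 + 1).choose (j + 1 + 1)
        = (2 * (j + 1) + 1).choose (j + 1) + (2 * (j + 1) + 1).choose (j + 1 + 1) :=
      Nat.choose_succ_succ' _ _
    have h2 : (2 * (j + 1) + 1 + 1).choose (j + 1)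
        = (2 * (j + 1) + 1).choose j + (2 * (j + 1) + 1).choose (j + 1) :=
      Nat.choose_succ_succ' _ _
    have h3 : (2 * (j + 1) + 1).choose (j + 1 + 1) = (2 * (j + 1) + 1).choose (j + 1) :=
      Nat.choose_symm_half (j + 1)
    rw [h1, h3] at *
    rw [h2]
    push_cast
    ring

lemma cc_closed : ∀ n j k, n = k + 2 * j → cc n k = (-1) ^ j * gg n j := by
  intro n
  induction n with
  | zero =>
    intro j k h
    have hj : j = 0 := by omega
    have hk : k = 0 := by omega
    subst hj; subst hk
    simp [gg, show cc 0 0 = 1 from rfl]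
  | succ n ih =>
    intro j k h
    match k with
    | 0 =>
      match j with
      | 0 => omega
      | j + 1 =>
        show -cc n 1 = _
        rw [ih j 1 (by omega)]
        have hn : n = 2 * j + 1 := by omega
        have key : gg n j = gg (n + 1) (j + 1) := by rw [hn]; exact gg_step j
        rw [key]; ring
    | k + 1 =>
      show cc n k - cc n (k + 2) = _
      match j with
      | 0 =>
        rw [ih 0 k (by omega), cc_gt n (k + 2) (by omega)]
        simp [gg]
      | j + 1 =>
        rw [ih (j + 1) k (by omega), ih j (k + 2) (by omega), gg_pascal]
        ring

lemma gg_half (j : ℕ) : gg (2 * j) j = ((2 * j).choose j : ℚ) / (j + 1) := by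
  match j with
  | 0 => norm_num [gg]
  | j + 1 =>
    unfold gg
    simp only [Nat.succ_ne_zero, if_false, Nat.add_sub_cancel]
    have h := Nat.choose_succ_right_eq (2 * (j + 1)) j
    have h2 : 2 * (j + 1) - j = j + 2 := by omega
    rw [h2] at h
    have hq : ((2 * (j + 1)).choose (j + 1) : ℚ) * (j + 1) = (2 * (j + 1)).choose j * (j + 2) := by
      exact_mod_cast congrArg (Nat.cast : ℕ → ℚ) h
    have hne : (j : ℚ) + 1 + 1 ≠ 0 := by positivity
    field_simp
    push_cast at hq ⊢
    linarith [hq]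

lemma nu_eq (n : ℕ) : sgnMoment n = cc n 0 := by
  rcases Nat.even_or_odd n with he | ho
  · obtain ⟨j, hj⟩ := he
    have hn : n = 0 + 2 * j := by omega
    rw [cc_closed n j 0 hn]
    unfold sgnMoment
    rw [if_pos (by exact ⟨j, hj⟩ : Even n)]
    have hh : n / 2 = j := by omega
    rw [hh, show n = 2 * j from by omega, gg_half]
    push_cast
    ring
  · rw [cc_parity n 0 (by simpa using ho)]
    unfold sgnMoment
    rw [if_neg (by simpa [Nat.even_iff, Nat.odd_iff] using ho)]

lemma Lmap_xpow_fib : ∀ k n, Lmap ((Polynomial.X : Polynomial ℚ) ^ n * fibPoly k)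
    = (-1 : ℚ) ^ k * cc n k := by
  intro k
  induction k using Nat.twoStepInduction with
  | zero =>
    intro n
    show Lmap (X ^ n * 1) = _
    rw [mul_one, X_pow_eq_monomial, Lmap_monomial, nu_eq]
    ring
  | one =>
    intro n
    show Lmap (X ^ n * X) = _
    rw [← pow_succ, X_pow_eq_monomial, Lmap_monomial, nu_eq]
    show 1 * cc (n + 1) 0 = _
    rw [show cc (n + 1) 0 = -cc n 1 from rfl]
    ring
  | more k ih1 ih2 =>
    intro n
    show Lmap (X ^ n * (X * fibPoly (k + 1) + fibPoly k)) = _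
    have h : (X : Polynomial ℚ) ^ n * (X * fibPoly (k + 1) + fibPoly k)
        = X ^ (n + 1) * fibPoly (k + 1) + X ^ n * fibPoly k := by ring
    rw [h, map_add, ih2 (n + 1), ih1 n,
      show cc (n + 1) (k + 1) = cc n k - cc n (k + 2) from rfl]
    ring

/-- Expansion of any polynomial of degree `d` in the Fibonacci basis:
`P = ∑_{k=0}^d (-1)^k ⟨P, P_k⟩ P_k`. -/
theorem fibPoly_expansion (d : ℕ) (P : Polynomial ℚ) (hd : P.natDegree ≤ d) :
    P = ∑ k ∈ Finset.range (d + 1),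
      Polynomial.C ((-1 : ℚ) ^ k * momForm sgnMoment P (fibPoly k)) * fibPoly k := by
  have hP : P = ∑ n ∈ Finset.range (d + 1), Polynomial.monomial n (P.coeff n) :=
    P.as_sum_range' (d + 1) (by omega)
  have hmom : ∀ k, momForm sgnMoment P (fibPoly k)
      = ∑ n ∈ Finset.range (d + 1), P.coeff n * ((-1 : ℚ) ^ k * cc n k) := by
    intro k
    rw [momForm_eq]
    conv_lhs => rw [hP]
    rw [Finset.sum_mul, map_sum]
    refine Finset.sum_congr rfl fun n _ => ?_
    rw [← C_mul_X_pow_eq_monomial, mul_assoc, ← smul_eq_C_mul, map_smul, smul_eq_mul,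
      Lmap_xpow_fib]
  have hone : ∀ k : ℕ, (-1 : ℚ) ^ k * (-1) ^ k = 1 := by
    intro k
    rw [← pow_add]
    exact Even.neg_one_pow ⟨k, rfl⟩
  calc P = ∑ n ∈ Finset.range (d + 1), Polynomial.monomial n (P.coeff n) := hP
    _ = ∑ n ∈ Finset.range (d + 1), Polynomial.C (P.coeff n)
          * ∑ k ∈ Finset.range (d + 1), Polynomial.C (cc n k) * fibPoly k := by
        refine Finset.sum_congr rfl fun n hn => ?_
        have hnd : n < d + 1 := Finset.mem_range.mp hn
        have hx : (Polynomial.X : Polynomial ℚ) ^ n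
            = ∑ k ∈ Finset.range (d + 1), Polynomial.C (cc n k) * fibPoly k := by
          obtain ⟨m, hm⟩ := Nat.le.dest (show n + 1 ≤ d + 1 by omega)
          rw [xpow_expand n, ← hm]
          conv_rhs => rw [Finset.sum_range_add]
          have hz : ∑ k ∈ Finset.range m,
              Polynomial.C (cc n (n + 1 + k)) * fibPoly (n + 1 + k) = 0 := by
            refine Finset.sum_eq_zero fun k _ => ?_
            rw [cc_gt n (n + 1 + k) (by omega), map_zero, zero_mul]
          rw [hz, add_zero]
        rw [← C_mul_X_pow_eq_monomial, hx]
    _ = ∑ n ∈ Finset.range (d + 1), ∑ k ∈ Finset.range (d + 1),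
          Polynomial.C (P.coeff n * cc n k) * fibPoly k := by
        refine Finset.sum_congr rfl fun n _ => ?_
        rw [Finset.mul_sum]
        refine Finset.sum_congr rfl fun k _ => ?_
        rw [map_mul]; ring
    _ = ∑ k ∈ Finset.range (d + 1), ∑ n ∈ Finset.range (d + 1),
          Polynomial.C (P.coeff n * cc n k) * fibPoly k := Finset.sum_comm
    _ = ∑ k ∈ Finset.range (d + 1),
          Polynomial.C ((-1 : ℚ) ^ k * momForm sgnMoment P (fibPoly k)) * fibPoly k := by
        refine Finset.sum_congr rfl fun k _ => ?_
        rw [hmom k, Finset.mul_sum, ← Finset.sum_mul, ← map_sum]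
        congr 2
        refine Finset.sum_congr rfl fun n _ => ?_
        calc P.coeff n * cc n k = P.coeff n * cc n k * ((-1 : ℚ) ^ k * (-1) ^ k) := by
              rw [hone, mul_one]
          _ = (-1 : ℚ) ^ k * (P.coeff n * ((-1) ^ k * cc n k)) := by ring
end
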